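/- arXiv:math/0202145 — 3 statements merged into one kernel-verified Lean document; each statement's English description precedes it below -/
import Mathlib

section
/- Let α > 0, let θ be a character of G of level N ≥ 1, and let x ∈ G. Then the function y ↦ F^{(α)}(y)·(θ(x·y^{−1}) − θ(x)) is μ-integrable on G and ∫_G F^{(α)}(y)·(θ(x·y^{−1}) − θ(x)) dμ(y) = q^{α·N·m_N}·θ(x). In other words, every nontrivial character of G is an eigenfunction of the fractional differentiation operator D^α with eigenvalue q^{α·N·m_N}, where N is its level. -/
open MeasureTheory Filter Topology

/-- A (unitary) continuous character of a topological group, with values in `ℂ`. -/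
def UnitaryCharacter (G : Type*) [Group G] [TopologicalSpace G] :=
  {θ : G → ℂ // Continuous θ ∧ (∀ a b : G, θ (a * b) = θ a * θ b) ∧
    ∀ a : G, ‖θ a‖ = 1}

/-!
`F` is constant, say `c l`, on each shell `V l \ V (l + 1)`, and `y ↦ θ (x * y⁻¹) - θ x`
vanishes on `V N`, so the integral is `∑ l < N, c l * (J l - J (l + 1))`, where `J l` is the
integral over `V l`. For `l < N` the character is nontrivial on `V l`, so translation invariance
of `μ` kills `∫ y in V l, (θ y)⁻¹` and `J l = -μ(V l) θ x`, while `J N = 0`. Summing by parts,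
`c l - c (l - 1) = (q ^ (α l m_l) - q ^ (α (l+1) m_(l+1))) / μ(V l)` turns the sum into
`(q ^ α + ∑ 1 ≤ l < N, (q ^ (α (l+1) m_(l+1)) - q ^ (α l m_l))) θ x`, which telescopes to
`q ^ (α N m_N) θ x` because `m 1 = 1`.
-/

open Finset Set

lemma MonoidHom.setIntegral_eq_zero_of_ne_one {G 𝕜 : Type*} [Group G] [MeasurableSpace G]
    [MeasurableMul G] {μ : Measure G} [μ.IsMulLeftInvariant] [RCLike 𝕜] (χ : G →* 𝕜)
    {S : Subgroup G} (hS : MeasurableSet (S : Set G)) {a : G} (ha : a ∈ S) (hχa : χ a ≠ 1) :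
    ∫ y in S, χ y ∂μ = 0 := by
  have htrans : ∀ y, (S : Set G).indicator χ (a * y) = χ a * (S : Set G).indicator χ y := by
    intro y
    by_cases hy : y ∈ S <;> simp [indicator, hy, Subgroup.mul_mem_cancel_left S ha]
  have hfix : ∫ y in S, χ y ∂μ = χ a * ∫ y in S, χ y ∂μ := by
    rw [← integral_indicator hS, ← integral_const_mul, ← integral_mul_left_eq_self _ a]
    simp only [htrans]
  have : (1 - χ a) * ∫ y in S, χ y ∂μ = 0 := by linear_combination hfix
  exact (mul_eq_zero.mp this).resolve_left (sub_ne_zero.mpr hχa.symm)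

namespace UnitaryCharacter

variable {G : Type*} [Group G] [TopologicalSpace G] (θ : UnitaryCharacter G)

lemma continuous : Continuous θ.1 := θ.2.1

lemma map_mul (a b : G) : θ.1 (a * b) = θ.1 a * θ.1 b := θ.2.2.1 a b

lemma norm_apply (a : G) : ‖θ.1 a‖ = 1 := θ.2.2.2 a

lemma ne_zero (a : G) : θ.1 a ≠ 0 := norm_ne_zero_iff.mp (by rw [θ.norm_apply]; exact one_ne_zero)

lemma map_one : θ.1 1 = 1 := by
  simpa [θ.ne_zero] using (θ.map_mul 1 1).symm

def toMonoidHom : G →* ℂ where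
  toFun := θ.1
  map_one' := θ.map_one
  map_mul' := θ.map_mul

lemma map_inv (a : G) : θ.1 a⁻¹ = (θ.1 a)⁻¹ := _root_.map_inv θ.toMonoidHom a

noncomputable instance : Inv (UnitaryCharacter G) where
  inv χ := ⟨fun a => (χ.1 a)⁻¹, χ.continuous.inv₀ χ.ne_zero,
    fun a b => by simp only [χ.map_mul, mul_inv], fun a => by rw [norm_inv, χ.norm_apply, inv_one]⟩

lemma inv_apply (a : G) : θ⁻¹.1 a = (θ.1 a)⁻¹ := rfl

lemma apply_mul_inv (x y : G) : θ.1 (x * y⁻¹) = θ.1 x * θ⁻¹.1 y := by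
  rw [θ.map_mul, θ.map_inv, inv_apply]

variable [MeasurableSpace G]

lemma setIntegral_eq_zero_of_ne_one [MeasurableMul G] {μ : Measure G} [μ.IsMulLeftInvariant]
    {S : Subgroup G} (hS : MeasurableSet (S : Set G)) {a : G} (ha : a ∈ S) (hθa : θ.1 a ≠ 1) :
    ∫ y in S, θ.1 y ∂μ = 0 :=
  θ.toMonoidHom.setIntegral_eq_zero_of_ne_one hS ha hθa

variable [OpensMeasurableSpace G]

lemma integrable (μ : Measure G) [IsFiniteMeasure μ] : Integrable θ.1 μ :=
  .of_bound θ.continuous.aestronglyMeasurable 1 (ae_of_all _ fun a => (θ.norm_apply a).le)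

lemma integrable_apply_mul_inv_sub (μ : Measure G) [IsFiniteMeasure μ] (x : G) :
    Integrable (fun y => θ.1 (x * y⁻¹) - θ.1 x) μ := by
  simp_rw [θ.apply_mul_inv]
  exact ((θ⁻¹.integrable μ).const_mul _).sub (integrable_const _)

lemma setIntegral_apply_mul_inv_sub [MeasurableMul G] {μ : Measure G} [IsFiniteMeasure μ]
    [μ.IsMulLeftInvariant] {S : Subgroup G} (hS : MeasurableSet (S : Set G)) {a : G} (ha : a ∈ S)
    (hθa : θ.1 a ≠ 1) (x : G) :
    ∫ y in S, (θ.1 (x * y⁻¹) - θ.1 x) ∂μ = -(μ.real S * θ.1 x) := by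
  have hθa' : θ⁻¹.1 a ≠ 1 := by rwa [inv_apply, ne_eq, inv_eq_one]
  simp_rw [θ.apply_mul_inv, ← mul_sub_one]
  rw [integral_const_mul, integral_sub (θ⁻¹.integrable μ).integrableOn (integrable_const _),
    θ⁻¹.setIntegral_eq_zero_of_ne_one hS ha hθa', setIntegral_const, Complex.real_smul]
  ring

end UnitaryCharacter

section Shells

variable {X : Type*} {V : ℕ → Set X}

lemma exists_lt_mem_diff_succ_of_notMem (hV0 : V 0 = univ) {y : X} :
    ∀ {N : ℕ}, y ∉ V N → ∃ l < N, y ∈ V l \ V (l + 1)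
  | 0, hy => absurd (hV0 ▸ mem_univ y) hy
  | N + 1, hy => by
    by_cases hyN : y ∈ V N
    · exact ⟨N, N.lt_succ_self, hyN, hy⟩
    · obtain ⟨l, hl, hyl⟩ := exists_lt_mem_diff_succ_of_notMem hV0 hyN
      exact ⟨l, hl.trans N.lt_succ_self, hyl⟩

lemma Antitone.eq_of_mem_diff_succ (hV : Antitone V) {y : X} {j l : ℕ}
    (hj : y ∈ V j \ V (j + 1)) (hl : y ∈ V l \ V (l + 1)) : j = l := by
  by_contra hjl
  rcases Nat.lt_or_gt_of_ne hjl with h | h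
  · exact hj.2 (hV h hl.1)
  · exact hl.2 (hV h hj.1)

lemma mul_eq_sum_indicator_diff_succ {R : Type*} [Semiring R] (hV : Antitone V)
    (hV0 : V 0 = univ) {F g : X → R} {c : ℕ → R} (hF : ∀ l, ∀ y ∈ V l \ V (l + 1), F y = c l)
    {N : ℕ} (hg : ∀ y ∈ V N, g y = 0) :
    (fun y => F y * g y) =
      fun y => ∑ l ∈ range N, (V l \ V (l + 1)).indicator (fun y => c l * g y) y := by
  ext y
  by_cases hyN : y ∈ V N
  · rw [hg y hyN, mul_zero]
    exact (sum_eq_zero fun l _ => indicator_apply_eq_zero.mpr fun _ => by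
      rw [hg y hyN, mul_zero]).symm
  obtain ⟨l, hlN, hyl⟩ := exists_lt_mem_diff_succ_of_notMem hV0 hyN
  rw [Finset.sum_eq_single_of_mem l (mem_range.mpr hlN), indicator_of_mem hyl, hF l y hyl]
  exact fun j _ hjl => indicator_of_notMem (fun hyj => hjl (hV.eq_of_mem_diff_succ hyj hyl)) _

lemma integrable_mul_and_integral_mul_eq_sum [MeasurableSpace X] {μ : Measure X} {𝕜 : Type*}
    [RCLike 𝕜] (hV : Antitone V) (hV0 : V 0 = univ) (hVm : ∀ n, MeasurableSet (V n))
    {F g : X → 𝕜} {c : ℕ → 𝕜} (hF : ∀ l, ∀ y ∈ V l \ V (l + 1), F y = c l) {N : ℕ}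
    (hg : Integrable g μ) (hgN : ∀ y ∈ V N, g y = 0) :
    Integrable (fun y => F y * g y) μ ∧ ∫ y, F y * g y ∂μ =
      ∑ l ∈ range N, c l * (∫ y in V l, g y ∂μ - ∫ y in V (l + 1), g y ∂μ) := by
  have hint : ∀ l, Integrable ((V l \ V (l + 1)).indicator (fun y => c l * g y)) μ :=
    fun l => (hg.const_mul _).indicator ((hVm l).diff (hVm (l + 1)))
  rw [mul_eq_sum_indicator_diff_succ hV hV0 hF hgN]
  refine ⟨integrable_finsetSum _ fun l _ => hint l, ?_⟩
  rw [integral_finsetSum _ fun l _ => hint l]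
  refine sum_congr rfl fun l _ => ?_
  rw [integral_indicator ((hVm l).diff (hVm (l + 1))), integral_const_mul,
    setIntegral_sdiff (hVm (l + 1)) hg.integrableOn (hV l.le_succ)]

end Shells

lemma sum_range_mul_sub_sub_mul_eq {R : Type*} [CommRing R] {c r e : ℕ → R}
    (h0 : -(c 0 * r 0) = e 1)
    (hstep : ∀ n, (c (n + 1) - c n) * r (n + 1) = e (n + 1) - e (n + 2)) :
    ∀ n, ∑ l ∈ range n, c l * (r (l + 1) - r l) - c n * r n = e (n + 1)
  | 0 => by simpa using h0
  | n + 1 => by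
    rw [sum_range_succ]
    linear_combination sum_range_mul_sub_sub_mul_eq h0 hstep n - hstep n

lemma sum_range_succ_mul_sub_eq {R : Type*} [CommRing R] {c r e J : ℕ → R} {z : R}
    (h0 : -(c 0 * r 0) = e 1)
    (hstep : ∀ n, (c (n + 1) - c n) * r (n + 1) = e (n + 1) - e (n + 2)) {n : ℕ}
    (hJ : ∀ l ≤ n, J l = -(r l * z)) (hJn : J (n + 1) = 0) :
    ∑ l ∈ range (n + 1), c l * (J l - J (l + 1)) = e (n + 1) * z := by
  have hsum : ∑ l ∈ range n, c l * (J l - J (l + 1)) =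
      (∑ l ∈ range n, c l * (r (l + 1) - r l)) * z := by
    rw [sum_mul]
    refine sum_congr rfl fun l hl => ?_
    have hl := mem_range.mp hl
    rw [hJ l hl.le, hJ (l + 1) hl]
    ring
  rw [sum_range_succ, hsum, hJ n le_rfl, hJn, ← sum_range_mul_sub_sub_mul_eq h0 hstep n]
  ring

theorem stmt3_general
    (q : ℕ) (hq : 2 ≤ q)
    (m : ℕ → ℕ) (hm1 : m 1 = 1)
    (G : Type*) [CommGroup G] [TopologicalSpace G] [IsTopologicalGroup G]
    [MeasurableSpace G] [BorelSpace G]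
    (μ : Measure G) [μ.IsHaarMeasure] [IsProbabilityMeasure μ]
    (V : ℕ → Subgroup G) (hVopen : ∀ n, IsOpen (V n : Set G))
    (hV0 : V 0 = ⊤) (hVdesc : ∀ n, V (n + 1) ≤ V n)
    (hVmeas : ∀ n, μ (V n : Set G) = ((q : ENNReal) ^ (n * m n))⁻¹)
    (α : ℝ)
    (F : G → ℝ)
    (hF : ∀ l : ℕ, ∀ y ∈ (V l : Set G) \ (V (l + 1) : Set G),
      F y = -(q : ℝ) ^ α + ∑ n ∈ Finset.Icc 1 l,
        ((q : ℝ) ^ (α * ((n * m n : ℕ) : ℝ))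
            - (q : ℝ) ^ (α * (((n + 1) * m (n + 1) : ℕ) : ℝ))) * (q : ℝ) ^ (n * m n))
    (θ : UnitaryCharacter G) (N : ℕ) (hN : 1 ≤ N)
    (hθtriv : ∀ y ∈ (V N : Set G), θ.1 y = 1)
    (hθnontriv : ∃ y ∈ (V (N - 1) : Set G), θ.1 y ≠ 1)
    (x : G) :
    Integrable (fun y : G => (F y : ℂ) * (θ.1 (x * y⁻¹) - θ.1 x)) μ ∧
    ∫ y : G, (F y : ℂ) * (θ.1 (x * y⁻¹) - θ.1 x) ∂μ
      = (((q : ℝ) ^ (α * ((N * m N : ℕ) : ℝ)) : ℝ) : ℂ) * θ.1 x := by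
  set c : ℕ → ℝ := fun l => -(q : ℝ) ^ α + ∑ n ∈ Finset.Icc 1 l,
    ((q : ℝ) ^ (α * ((n * m n : ℕ) : ℝ))
      - (q : ℝ) ^ (α * (((n + 1) * m (n + 1) : ℕ) : ℝ))) * (q : ℝ) ^ (n * m n)
  set e : ℕ → ℝ := fun n => (q : ℝ) ^ (α * ((n * m n : ℕ) : ℝ))
  set r : ℕ → ℝ := fun n => ((q : ℝ) ^ (n * m n))⁻¹
  have hq0 : (q : ℝ) ≠ 0 := by positivity
  have h0 : -(c 0 * r 0) = e 1 := by simp [c, r, e, hm1]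
  have hstep : ∀ n, (c (n + 1) - c n) * r (n + 1) = e (n + 1) - e (n + 2) := fun n => by
    simp only [c, r, e, sum_Icc_succ_top (Nat.le_add_left 1 n)]
    field_simp
    ring
  have hVm : ∀ n, MeasurableSet (V n : Set G) := fun n => (hVopen n).measurableSet
  have hvanish : ∀ y ∈ (V N : Set G), θ.1 (x * y⁻¹) - θ.1 x = 0 := fun y hy => by
    rw [θ.map_mul, θ.map_inv, hθtriv y hy, inv_one, mul_one, sub_self]
  obtain ⟨hint, hsum⟩ := integrable_mul_and_integral_mul_eq_sum (μ := μ)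
    (antitone_nat_of_succ_le (f := fun n => (V n : Set G)) hVdesc) (by simp [hV0]) hVm
    (c := fun l => (c l : ℂ)) (fun l y hy => congrArg _ (hF l y hy))
    (θ.integrable_apply_mul_inv_sub μ x) hvanish
  refine ⟨hint, ?_⟩
  obtain ⟨a, haV, hθa⟩ := hθnontriv
  obtain ⟨n, rfl⟩ : ∃ n, N = n + 1 := ⟨N - 1, by omega⟩
  rw [hsum]
  refine sum_range_succ_mul_sub_eq (r := fun n => (r n : ℂ)) (e := fun n => (e n : ℂ))
    (by exact_mod_cast h0) (fun n => by exact_mod_cast hstep n) (fun l hl => ?_)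
    (setIntegral_eq_zero_of_forall_eq_zero hvanish)
  have haVl : a ∈ V l := antitone_nat_of_succ_le hVdesc hl haV
  rw [θ.setIntegral_apply_mul_inv_sub (hVm l) haVl hθa, measureReal_def, hVmeas]
  simp [r]

/-- every character `θ` of level `N ≥ 1` is an eigenfunction of the
fractional differentiation operator `D^α` with eigenvalue `q^{α N m_N}`:
`∫_G F^{(α)}(y)(θ(x y⁻¹) − θ(x)) dμ(y) = q^{α N m_N} θ(x)`. -/
theorem stmt3
    (q : ℕ) (hq : 2 ≤ q)
    (m : ℕ → ℕ) (hm0 : m 0 = 0) (hm1 : m 1 = 1)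
    (hmgrow : ∀ n : ℕ, 1 ≤ n → 2 * m n ≤ m (n + 1))
    (G : Type*) [CommGroup G] [TopologicalSpace G] [IsTopologicalGroup G]
    [CompactSpace G] [MeasurableSpace G] [BorelSpace G]
    (μ : Measure G) [μ.IsHaarMeasure] [IsProbabilityMeasure μ]
    (V : ℕ → Subgroup G) (hVopen : ∀ n, IsOpen (V n : Set G))
    (hV0 : V 0 = ⊤) (hVdesc : ∀ n, V (n + 1) ≤ V n)
    (hVmeas : ∀ n, μ (V n : Set G) = ((q : ENNReal) ^ (n * m n))⁻¹)
    (α : ℝ) (hα : 0 < α)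
    (F : G → ℝ)
    (hF : ∀ l : ℕ, ∀ y ∈ (V l : Set G) \ (V (l + 1) : Set G),
      F y = -(q : ℝ) ^ α + ∑ n ∈ Finset.Icc 1 l,
        ((q : ℝ) ^ (α * ((n * m n : ℕ) : ℝ))
            - (q : ℝ) ^ (α * (((n + 1) * m (n + 1) : ℕ) : ℝ))) * (q : ℝ) ^ (n * m n))
    (hF0 : ∀ y ∈ ⋂ n : ℕ, (V n : Set G), F y = 0)
    (θ : UnitaryCharacter G) (N : ℕ) (hN : 1 ≤ N)
    (hθtriv : ∀ y ∈ (V N : Set G), θ.1 y = 1)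
    (hθnontriv : ∃ y ∈ (V (N - 1) : Set G), θ.1 y ≠ 1)
    (x : G) :
    Integrable (fun y : G => (F y : ℂ) * (θ.1 (x * y⁻¹) - θ.1 x)) μ ∧
    ∫ y : G, (F y : ℂ) * (θ.1 (x * y⁻¹) - θ.1 x) ∂μ
      = (((q : ℝ) ^ (α * ((N * m N : ℕ) : ℝ)) : ℝ) : ℂ) * θ.1 x :=
  stmt3_general q hq m hm1 G μ V hVopen hV0 hVdesc hVmeas α F hF θ N hN hθtriv hθnontriv x
end

section
/- Let α > 0, t > 0, and let θ be a character of G of level N ≥ 1. Then z ↦ θ(z)·G_α(t,z) is μ-integrable on G and ∫_G θ(z)·G_α(t,z) dμ(z) = e^{−t·q^{α·N·m_N}}. -/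
/-!
Off the null set `⋂ n, V n` the kernel is the series `K = ∑ₙ bₙ 𝟙_{Vₙ}`, where
`uₙ = exp (-t φₙ)` and `bₙ = (uₙ - uₙ₊₁) q^{n mₙ} ≥ 0`: a point of `V_l \ V_{l+1}` lies in exactly
`V₀, …, V_l`. Since `bₙ μ(Vₙ) = uₙ - uₙ₊₁` telescopes, the series converges in `L¹` and can be
integrated against `θ` term by term. Translation invariance of `μ` forces `∫_{Vₙ} θ = 0` when `θ`
is nontrivial on `Vₙ`, i.e. for `n < N`, while `∫_{Vₙ} θ = μ(Vₙ)` for `n ≥ N`. What remains is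
the tail `∑_{n ≥ N} (uₙ - uₙ₊₁) = u_N`.
-/

open MeasureTheory Filter Topology

theorem hasSum_sub_succ_of_antitone {u : ℕ → ℝ} (hu : Antitone u)
    (hu0 : Tendsto u atTop (𝓝 0)) : HasSum (fun n => u n - u (n + 1)) (u 0) := by
  rw [hasSum_iff_tendsto_nat_of_nonneg (fun n => sub_nonneg.2 (hu n.le_succ))]
  simp_rw [Finset.sum_range_sub']
  simpa using tendsto_const_nhds.sub hu0

theorem hasSum_ite_sub_succ_of_antitone {u : ℕ → ℝ} (hu : Antitone u)
    (hu0 : Tendsto u atTop (𝓝 0)) (N : ℕ) :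
    HasSum (fun n => if N ≤ n then u n - u (n + 1) else 0) (u N) := by
  rw [← hasSum_nat_add_iff' N, Finset.sum_eq_zero fun n hn => if_neg (by simpa using hn),
    sub_zero]
  have := hasSum_sub_succ_of_antitone (u := fun n => u (n + N))
    (fun a b h => hu (by omega)) (hu0.comp (tendsto_add_atTop_nat N))
  simpa [Nat.add_right_comm _ 1 N] using this

section Series

variable {α : Type*} [MeasurableSpace α] {μ : Measure α}

theorem integrable_of_ae_hasSum_of_nonneg {f : ℕ → α → ℝ} {g : α → ℝ}
    (hf : ∀ n, Integrable (f n) μ) (hf_nonneg : ∀ n, 0 ≤ᵐ[μ] f n)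
    (hf_sum : Summable fun n => ∫ a, f n a ∂μ)
    (hg : ∀ᵐ a ∂μ, HasSum (fun n => f n a) (g a)) : Integrable g μ := by
  have hf_nonneg' : ∀ᵐ a ∂μ, ∀ n, 0 ≤ f n a := ae_all_iff.2 hf_nonneg
  refine ⟨aestronglyMeasurable_of_tendsto_ae atTop
    (fun n => Finset.aestronglyMeasurable_fun_sum _ fun i _ => (hf i).1)
    (hg.mono fun a ha => ha.tendsto_sum_nat), ?_⟩
  rw [hasFiniteIntegral_iff_ofReal
    (by filter_upwards [hg, hf_nonneg'] with a ha h0 using ha.nonneg h0)]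
  calc ∫⁻ a, ENNReal.ofReal (g a) ∂μ = ∫⁻ a, ∑' n, ENNReal.ofReal (f n a) ∂μ := by
        refine lintegral_congr_ae ?_
        filter_upwards [hg, hf_nonneg'] with a ha h0
        rw [← ha.tsum_eq, ENNReal.ofReal_tsum_of_nonneg h0 ha.summable]
    _ = ∑' n, ENNReal.ofReal (∫ a, f n a ∂μ) := by
        rw [lintegral_tsum fun n => (hf n).aemeasurable.ennreal_ofReal]
        exact tsum_congr fun n => (ofReal_integral_eq_lintegral_ofReal (hf n) (hf_nonneg n)).symm
    _ < ⊤ := by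
        rw [← ENNReal.ofReal_tsum_of_nonneg (fun n => integral_nonneg_of_ae (hf_nonneg n)) hf_sum]
        exact ENNReal.ofReal_lt_top

variable {s : ℕ → Set α} {b : ℕ → ℝ} {K : α → ℝ}

theorem integrable_of_ae_hasSum_indicator (hs : ∀ n, MeasurableSet (s n))
    (hs_fin : ∀ n, μ (s n) ≠ ⊤) (hb : ∀ n, 0 ≤ b n)
    (hb_sum : Summable fun n => μ.real (s n) * b n)
    (hK : ∀ᵐ a ∂μ, HasSum (fun n => (s n).indicator (fun _ => b n) a) (K a)) :
    Integrable K μ := by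
  refine integrable_of_ae_hasSum_of_nonneg (fun n => ?_)
    (fun n => .of_forall (Set.indicator_nonneg fun _ _ => hb n)) ?_ hK
  · exact (integrable_indicator_iff (hs n)).2 (integrableOn_const (hs_fin n))
  · simpa [integral_indicator_const _ (hs _)] using hb_sum

theorem hasSum_integral_mul_of_ae_hasSum_indicator (hs : ∀ n, MeasurableSet (s n))
    (hb : ∀ n, 0 ≤ b n)
    (hK_int : Integrable K μ)
    (hK : ∀ᵐ a ∂μ, HasSum (fun n => (s n).indicator (fun _ => b n) a) (K a))
    {θ : α → ℂ} (hθ : AEStronglyMeasurable θ μ) (hθ_le : ∀ a, ‖θ a‖ ≤ 1) :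
    HasSum (fun n => (∫ a in s n, θ a ∂μ) * b n) (∫ a, θ a * K a ∂μ) := by
  have h_ind_nonneg (n : ℕ) (a : α) : 0 ≤ (s n).indicator (fun _ => b n) a :=
    Set.indicator_nonneg (fun _ _ => hb n) a
  have h_term (n : ℕ) : ∫ a, θ a * (((s n).indicator (fun _ => b n) a : ℝ) : ℂ) ∂μ
      = (∫ a in s n, θ a ∂μ) * b n := by
    rw [← integral_mul_const, ← integral_indicator (hs n)]
    congr 1 with a
    by_cases ha : a ∈ s n <;> simp [ha]
  simp_rw [← h_term]
  refine hasSum_integral_of_dominated_convergence (fun n a => (s n).indicator (fun _ => b n) a)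
    (fun n => ?_) (fun n => .of_forall fun a => ?_) (hK.mono fun a ha => ha.summable)
    (hK_int.congr (hK.mono fun a ha => ha.tsum_eq.symm))
    (hK.mono fun a ha => (Complex.ofRealCLM.hasSum ha).mul_left (θ a))
  · exact hθ.mul (Complex.measurable_ofReal.comp
      (measurable_const.indicator (hs n))).aestronglyMeasurable
  · rw [norm_mul, Complex.norm_real, Real.norm_of_nonneg (h_ind_nonneg n a)]
    exact mul_le_of_le_one_left (h_ind_nonneg n a) (hθ_le a)

end Series

theorem exists_mem_diff_succ_of_notMem_iInter {α : Type*} {s : ℕ → Set α} {x : α}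
    (h0 : x ∈ s 0) (hx : x ∉ ⋂ n, s n) : ∃ l, x ∈ s l \ s (l + 1) := by
  by_contra! h
  exact hx (Set.mem_iInter.2 fun n => n.rec h0 fun l hl => not_not.1 fun h' => h l ⟨hl, h'⟩)

theorem ae_hasSum_indicator_of_antitone {α : Type*} [MeasurableSpace α] {μ : Measure α}
    {s : ℕ → Set α} (hs : Antitone s) (hs0 : s 0 = Set.univ)
    (hs_lim : Tendsto (fun n => μ (s n)) atTop (𝓝 0)) {c : ℕ → ℝ} {K : α → ℝ}
    (hK : ∀ l, ∀ x ∈ s l \ s (l + 1), K x = ∑ n ∈ Finset.range (l + 1), c n) :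
    ∀ᵐ x ∂μ, HasSum (fun n => (s n).indicator (fun _ => c n) x) (K x) := by
  have hnull : μ (⋂ n, s n) = 0 :=
    nonpos_iff_eq_zero.1 (ge_of_tendsto' hs_lim fun n => measure_mono (Set.iInter_subset _ n))
  filter_upwards [measure_eq_zero_iff_ae_notMem.1 hnull] with x hx
  obtain ⟨l, hl⟩ := exists_mem_diff_succ_of_notMem_iInter (hs0 ▸ Set.mem_univ x) hx
  have hmem (n : ℕ) : x ∈ s n ↔ n ≤ l :=
    ⟨fun h => not_lt.1 fun hln => hl.2 (hs hln h), fun h => hs h hl.1⟩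
  have hsum : ∑ n ∈ Finset.range (l + 1), c n
      = ∑ n ∈ Finset.range (l + 1), (s n).indicator (fun _ => c n) x :=
    Finset.sum_congr rfl fun n hn =>
      (Set.indicator_of_mem ((hmem n).2 (Finset.mem_range_succ_iff.1 hn)) (fun _ => c n)).symm
  rw [hK l x hl, hsum]
  exact hasSum_sum_of_ne_finset_zero fun n hn =>
    Set.indicator_of_notMem (fun h => hn (Finset.mem_range_succ_iff.2 ((hmem n).1 h))) _

section Character

variable {G : Type*} [Group G] [MeasurableSpace G] [MeasurableMul G] {μ : Measure G}
  [μ.IsMulLeftInvariant] {θ : G → ℂ}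

theorem integral_indicator_eq_zero_of_apply_ne_one (hθ : ∀ a b, θ (a * b) = θ a * θ b)
    (H : Subgroup G) {y : G} (hyH : y ∈ H) (hy : θ y ≠ 1) :
    ∫ z, (H : Set G).indicator θ z ∂μ = 0 := by
  have h_transl : ∫ z, (H : Set G).indicator θ z ∂μ = θ y * ∫ z, (H : Set G).indicator θ z ∂μ :=
    calc ∫ z, (H : Set G).indicator θ z ∂μ = ∫ z, (H : Set G).indicator θ (y * z) ∂μ :=
          (integral_mul_left_eq_self _ y).symm
      _ = ∫ z, θ y * (H : Set G).indicator θ z ∂μ := by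
          congr 1 with z
          by_cases hz : z ∈ H
          · rw [Set.indicator_of_mem (H.mul_mem hyH hz), Set.indicator_of_mem hz, hθ]
          · rw [Set.indicator_of_notMem (mt (H.mul_mem_cancel_left hyH).1 hz),
              Set.indicator_of_notMem hz, mul_zero]
      _ = θ y * ∫ z, (H : Set G).indicator θ z ∂μ := integral_const_mul _ _
  have : (θ y - 1) * ∫ z, (H : Set G).indicator θ z ∂μ = 0 := by
    rw [sub_mul, one_mul, ← h_transl, sub_self]
  exact (mul_eq_zero.1 this).resolve_left (sub_ne_zero.2 hy)

theorem setIntegral_eq_ite_of_level (hθ : ∀ a b, θ (a * b) = θ a * θ b)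
    {V : ℕ → Subgroup G} (hV : Antitone V) (hV_meas : ∀ n, MeasurableSet (V n : Set G)) {N : ℕ}
    (hθ_triv : ∀ y ∈ V N, θ y = 1) (hθ_nontriv : ∃ y ∈ V (N - 1), θ y ≠ 1) (n : ℕ) :
    ∫ z in V n, θ z ∂μ = if N ≤ n then (μ.real (V n) : ℂ) else 0 := by
  split_ifs with h
  · rw [setIntegral_congr_fun (hV_meas n) fun z hz => hθ_triv z (hV h hz), setIntegral_const,
      Complex.real_smul, mul_one]
  · obtain ⟨y, hyV, hy⟩ := hθ_nontriv
    rw [← integral_indicator (hV_meas n)]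
    exact integral_indicator_eq_zero_of_apply_ne_one hθ (V n) (hV (by omega) hyV) hy

theorem integrable_and_integral_mul_eq_of_level (hθ_meas : AEStronglyMeasurable θ μ)
    (hθ_mul : ∀ a b, θ (a * b) = θ a * θ b) (hθ_le : ∀ z, ‖θ z‖ ≤ 1)
    {V : ℕ → Subgroup G} (hV : Antitone V) (hV_meas : ∀ n, MeasurableSet (V n : Set G))
    (hV_fin : ∀ n, μ (V n) ≠ ⊤) {N : ℕ} (hθ_triv : ∀ y ∈ V N, θ y = 1)
    (hθ_nontriv : ∃ y ∈ V (N - 1), θ y ≠ 1) {u b : ℕ → ℝ} (hu : Antitone u)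
    (hu0 : Tendsto u atTop (𝓝 0)) (hb : ∀ n, μ.real (V n) * b n = u n - u (n + 1))
    (hb_nonneg : ∀ n, 0 ≤ b n) {K : G → ℝ}
    (hK : ∀ᵐ z ∂μ, HasSum (fun n => (V n : Set G).indicator (fun _ => b n) z) (K z)) :
    Integrable (fun z => θ z * K z) μ ∧ ∫ z, θ z * K z ∂μ = u N := by
  have hK_int := integrable_of_ae_hasSum_indicator hV_meas hV_fin hb_nonneg
    ((hasSum_sub_succ_of_antitone hu hu0).summable.congr fun n => (hb n).symm) hK
  refine ⟨hK_int.ofReal.bdd_mul hθ_meas (.of_forall hθ_le), ?_⟩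
  have h_series := hasSum_integral_mul_of_ae_hasSum_indicator hV_meas hb_nonneg hK_int hK
    hθ_meas hθ_le
  simp_rw [setIntegral_eq_ite_of_level hθ_mul hV hV_meas hθ_triv hθ_nontriv] at h_series
  refine h_series.unique ?_
  convert Complex.hasSum_ofReal.2 (hasSum_ite_sub_succ_of_antitone hu hu0 N) using 1
  ext n
  split_ifs <;> simp [← hb n]

end Character

section Exponents

theorem le_mul_apply_of_two_mul_le_succ {m : ℕ → ℕ} (hm1 : m 1 = 1)
    (hm : ∀ n, 1 ≤ n → 2 * m n ≤ m (n + 1)) (n : ℕ) : n ≤ n * m n := by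
  rcases n.eq_zero_or_pos with rfl | hn
  · simp
  have hm_pos : 1 ≤ m n := by
    induction n, hn using Nat.le_induction with
    | base => exact hm1.ge
    | succ k hk ih => linarith [hm k hk]
  exact Nat.le_mul_of_pos_right n hm_pos

theorem monotone_mul_apply_of_two_mul_le_succ {m : ℕ → ℕ}
    (hm : ∀ n, 1 ≤ n → 2 * m n ≤ m (n + 1)) : Monotone fun n => n * m n := by
  refine monotone_nat_of_le_succ fun n => ?_
  rcases n.eq_zero_or_pos with rfl | hn
  · simp
  nlinarith [hm n hn]

variable {q α : ℝ} {k : ℕ → ℕ} {φ : ℕ → ℝ}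

theorem monotone_of_eq_rpow (hq : 1 ≤ q) (hα : 0 ≤ α) (hk : Monotone k) (hφ0 : φ 0 = 0)
    (hφ : ∀ n, 1 ≤ n → φ n = q ^ (α * (k n : ℝ))) : Monotone φ := by
  refine monotone_nat_of_le_succ fun n => ?_
  rcases n.eq_zero_or_pos with rfl | hn
  · rw [hφ0, hφ 1 le_rfl]
    exact Real.rpow_nonneg (by linarith) _
  rw [hφ n hn, hφ (n + 1) (by omega)]
  exact Real.rpow_le_rpow_of_exponent_le hq
    (mul_le_mul_of_nonneg_left (by exact_mod_cast hk n.le_succ) hα)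

theorem tendsto_atTop_of_eq_rpow (hq : 1 < q) (hα : 0 < α) (hk : Tendsto k atTop atTop)
    (hφ : ∀ n, 1 ≤ n → φ n = q ^ (α * (k n : ℝ))) : Tendsto φ atTop atTop :=
  ((tendsto_rpow_atTop_of_base_gt_one q hq).comp
    ((tendsto_natCast_atTop_atTop.comp hk).const_mul_atTop hα)).congr'
    ((eventually_ge_atTop 1).mono fun n hn => (hφ n hn).symm)

theorem antitone_exp_neg_mul {t : ℝ} (ht : 0 ≤ t) (hφ : Monotone φ) :
    Antitone fun n => Real.exp (-(t * φ n)) := fun _ _ h =>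
  Real.exp_le_exp.2 (neg_le_neg (mul_le_mul_of_nonneg_left (hφ h) ht))

theorem tendsto_exp_neg_mul_nhds_zero {t : ℝ} (ht : 0 < t) (hφ : Tendsto φ atTop atTop) :
    Tendsto (fun n => Real.exp (-(t * φ n))) atTop (𝓝 0) :=
  Real.tendsto_exp_atBot.comp (tendsto_neg_atTop_atBot.comp (hφ.const_mul_atTop ht))

end Exponents

theorem stmt7_general
    (q : ℕ) (hq : 2 ≤ q)
    (m : ℕ → ℕ) (hm1 : m 1 = 1)
    (hmgrow : ∀ n : ℕ, 1 ≤ n → 2 * m n ≤ m (n + 1))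
    (G : Type*) [CommGroup G] [TopologicalSpace G] [IsTopologicalGroup G]
    [MeasurableSpace G] [BorelSpace G]
    (μ : Measure G) [μ.IsHaarMeasure]
    (V : ℕ → Subgroup G) (hVopen : ∀ n, IsOpen (V n : Set G))
    (hV0 : V 0 = ⊤) (hVdesc : ∀ n, V (n + 1) ≤ V n)
    (hVmeas : ∀ n, μ (V n : Set G) = ((q : ENNReal) ^ (n * m n))⁻¹)
    (α t : ℝ) (hα : 0 < α) (ht : 0 < t)
    (φ : ℕ → ℝ) (hφ0 : φ 0 = 0)
    (hφ : ∀ n : ℕ, 1 ≤ n → φ n = (q : ℝ) ^ (α * ((n * m n : ℕ) : ℝ)))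
    (K : G → ℝ)
    (hK : ∀ l : ℕ, ∀ z ∈ (V l : Set G) \ (V (l + 1) : Set G),
      K z = ∑ n ∈ Finset.range (l + 1),
        (Real.exp (-(t * φ n)) - Real.exp (-(t * φ (n + 1)))) * (q : ℝ) ^ (n * m n))
    (θ : UnitaryCharacter G) (N : ℕ) (hN : 1 ≤ N)
    (hθtriv : ∀ y ∈ (V N : Set G), θ.1 y = 1)
    (hθnontriv : ∃ y ∈ (V (N - 1) : Set G), θ.1 y ≠ 1) :
    Integrable (fun z : G => θ.1 z * (K z : ℂ)) μ ∧
    ∫ z : G, θ.1 z * (K z : ℂ) ∂μ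
      = ((Real.exp (-(t * (q : ℝ) ^ (α * ((N * m N : ℕ) : ℝ)))) : ℝ) : ℂ) := by
  obtain ⟨hθ_cont, hθ_mul, hθ_norm⟩ := θ.2
  have hq1 : (1 : ℝ) < q := by exact_mod_cast hq
  have hk_lim : Tendsto (fun n => n * m n) atTop atTop :=
    tendsto_atTop_mono (le_mul_apply_of_two_mul_le_succ hm1 hmgrow) tendsto_id
  have hu_anti := antitone_exp_neg_mul ht.le <| monotone_of_eq_rpow hq1.le hα.le
    (monotone_mul_apply_of_two_mul_le_succ hmgrow) hφ0 hφ
  have hu_lim := tendsto_exp_neg_mul_nhds_zero ht (tendsto_atTop_of_eq_rpow hq1 hα hk_lim hφ)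
  have hV_anti : Antitone V := antitone_nat_of_succ_le hVdesc
  have hV_lim : Tendsto (fun n => μ (V n)) atTop (𝓝 0) := by
    simp_rw [hVmeas, ENNReal.inv_pow]
    exact (ENNReal.tendsto_pow_atTop_nhds_zero_iff.2
      (ENNReal.inv_lt_one.2 (by exact_mod_cast hq))).comp hk_lim
  have hV_fin n : μ (V n) ≠ ⊤ := by
    rw [hVmeas]
    exact ENNReal.inv_ne_top.2 (pow_ne_zero _ (by positivity))
  have hVb n : μ.real (V n) * ((Real.exp (-(t * φ n)) - Real.exp (-(t * φ (n + 1))))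
      * (q : ℝ) ^ (n * m n)) = Real.exp (-(t * φ n)) - Real.exp (-(t * φ (n + 1))) := by
    rw [measureReal_def, hVmeas, ENNReal.toReal_inv, ENNReal.toReal_pow, ENNReal.toReal_natCast]
    field_simp
  have hb_nonneg n : 0 ≤ (Real.exp (-(t * φ n)) - Real.exp (-(t * φ (n + 1))))
      * (q : ℝ) ^ (n * m n) := mul_nonneg (sub_nonneg.2 (hu_anti n.le_succ)) (by positivity)
  obtain ⟨h_int, h_eq⟩ := integrable_and_integral_mul_eq_of_level hθ_cont.aestronglyMeasurable
    hθ_mul (fun z => (hθ_norm z).le) hV_anti (fun n => (hVopen n).measurableSet) hV_fin hθtriv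
    hθnontriv hu_anti hu_lim hVb hb_nonneg
    (ae_hasSum_indicator_of_antitone (fun _ _ h => hV_anti h) (by simp [hV0]) hV_lim hK)
  exact ⟨h_int, by rw [h_eq, hφ N hN]⟩

/-- for `α > 0`, `t > 0` and a character `θ` of level `N ≥ 1`,
`z ↦ θ(z) G_α(t,z)` is `μ`-integrable and
`∫_G θ(z) G_α(t,z) dμ(z) = e^{−t q^{α N m_N}}`. -/
theorem stmt7
    (q : ℕ) (hq : 2 ≤ q)
    (m : ℕ → ℕ) (hm0 : m 0 = 0) (hm1 : m 1 = 1)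
    (hmgrow : ∀ n : ℕ, 1 ≤ n → 2 * m n ≤ m (n + 1))
    (G : Type*) [CommGroup G] [TopologicalSpace G] [IsTopologicalGroup G]
    [CompactSpace G] [MeasurableSpace G] [BorelSpace G]
    (μ : Measure G) [μ.IsHaarMeasure] [IsProbabilityMeasure μ]
    (V : ℕ → Subgroup G) (hVopen : ∀ n, IsOpen (V n : Set G))
    (hV0 : V 0 = ⊤) (hVdesc : ∀ n, V (n + 1) ≤ V n)
    (hVmeas : ∀ n, μ (V n : Set G) = ((q : ENNReal) ^ (n * m n))⁻¹)
    (α t : ℝ) (hα : 0 < α) (ht : 0 < t)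
    (φ : ℕ → ℝ) (hφ0 : φ 0 = 0)
    (hφ : ∀ n : ℕ, 1 ≤ n → φ n = (q : ℝ) ^ (α * ((n * m n : ℕ) : ℝ)))
    (K : G → ℝ)
    (hK : ∀ l : ℕ, ∀ z ∈ (V l : Set G) \ (V (l + 1) : Set G),
      K z = ∑ n ∈ Finset.range (l + 1),
        (Real.exp (-(t * φ n)) - Real.exp (-(t * φ (n + 1)))) * (q : ℝ) ^ (n * m n))
    (hK0 : ∀ z ∈ ⋂ n : ℕ, (V n : Set G), K z = 0)
    (θ : UnitaryCharacter G) (N : ℕ) (hN : 1 ≤ N)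
    (hθtriv : ∀ y ∈ (V N : Set G), θ.1 y = 1)
    (hθnontriv : ∃ y ∈ (V (N - 1) : Set G), θ.1 y ≠ 1) :
    Integrable (fun z : G => θ.1 z * (K z : ℂ)) μ ∧
    ∫ z : G, θ.1 z * (K z : ℂ) ∂μ
      = ((Real.exp (-(t * (q : ℝ) ^ (α * ((N * m N : ℕ) : ℝ)))) : ℝ) : ℂ) :=
  stmt7_general q hq m hm1 hmgrow G μ V hVopen hV0 hVdesc hVmeas α t hα ht φ hφ0 hφ K hK θ N hN
    hθtriv hθnontriv
end

section
/- Let q ≥ 2 be an integer, α > 0 a real number, and (m_n)_{n≥0} a sequence of natural numbers with m_0 = 0, m_1 = 1, and m_{n+1} ≥ 2·m_n for all n ≥ 1. Define ν_n = q^α + Σ_{l=1}^{n} q^{l·m_l}·(q^{α·(l+1)·m_{l+1}} − q^{α·l·m_l}) for n ≥ 0 (the sum empty for n = 0). Then ν_n·q^{−(n·m_n + α·(n+1)·m_{n+1})} → 1 as n → ∞; that is, ν_n ∼ q^{n·m_n + α·(n+1)·m_{n+1}}. -/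
/-!
With `a_n = n m_n` and `D_n = q^(a_n + α a_(n+1))`, the last summand of `ν_n` is
`D_n - q^((1 + α) a_n)`, and each of the `n - 1` earlier summands is at most
`q^((1 + α) a_n)`. Since `a_(n+1) ≥ 2 a_n ≥ a_n + n`, this and the leading `q^α` are at most
`D_n q^(-α n)`, so `|ν_n / D_n - 1| ≤ (n + 1) q^(-α n) → 0`.
-/

open Filter Topology Finset

section Doubling

variable {a : ℕ → ℕ}

lemma monotoneOn_of_doubling (ha : ∀ n, 1 ≤ n → 2 * a n ≤ a (n + 1)) :
    MonotoneOn a (Set.Ici 1) :=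
  monotoneOn_nat_Ici_of_le_succ fun n hn => by have := ha n hn; omega

lemma self_le_of_doubling (ha : ∀ n, 1 ≤ n → 2 * a n ≤ a (n + 1)) (ha1 : 1 ≤ a 1) (n : ℕ) :
    n ≤ a n := by
  induction n with
  | zero => omega
  | succ k ih =>
    rcases Nat.eq_zero_or_pos k with rfl | hk
    · exact ha1
    · have := ha k hk; omega

end Doubling

/-- `ν_n` with `Q = q` and `s = q^α`, so that `q^(α k) = s^k` and `a l = l m_l`. -/
noncomputable def levyDensity (Q s : ℝ) (a : ℕ → ℕ) (n : ℕ) : ℝ :=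
  s + ∑ l ∈ Icc 1 n, Q ^ a l * (s ^ a (l + 1) - s ^ a l)

section LevyDensity

variable {Q s : ℝ} {a : ℕ → ℕ} {n : ℕ}

lemma levyDensity_ge (hQ : 0 ≤ Q) (hs : 1 ≤ s) (ha : MonotoneOn a (Set.Ici 1)) (hn : 1 ≤ n) :
    Q ^ a n * s ^ a (n + 1) - Q ^ a n * s ^ a n ≤ levyDensity Q s a n := by
  have hterm : ∀ l ∈ Icc 1 n, 0 ≤ Q ^ a l * (s ^ a (l + 1) - s ^ a l) := fun l hl =>
    mul_nonneg (pow_nonneg hQ _) <| sub_nonneg.2 <| pow_le_pow_right₀ hs <|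
      ha (mem_Icc.1 hl).1 (by simp) (by omega)
  have := single_le_sum hterm (mem_Icc.2 ⟨hn, le_rfl⟩)
  rw [levyDensity, ← mul_sub]
  linarith

lemma levyDensity_le (hQ : 1 ≤ Q) (hs : 1 ≤ s) (ha : MonotoneOn a (Set.Ici 1)) (hn : 1 ≤ n) :
    levyDensity Q s a n ≤ s + Q ^ a n * s ^ a (n + 1) + n * (Q ^ a n * s ^ a n) := by
  obtain ⟨p, rfl⟩ : ∃ p, n = p + 1 := ⟨n - 1, by omega⟩
  have hterm : ∀ l, Q ^ a l * (s ^ a (l + 1) - s ^ a l) ≤ Q ^ a l * s ^ a (l + 1) := fun l =>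
    mul_le_mul_of_nonneg_left (by linarith [pow_nonneg (zero_le_one.trans hs) (a l)])
      (pow_nonneg (zero_le_one.trans hQ) _)
  have hearly : ∀ l ∈ Icc 1 p, Q ^ a l * (s ^ a (l + 1) - s ^ a l) ≤
      Q ^ a (p + 1) * s ^ a (p + 1) := fun l hl => by
    obtain ⟨hl1, hlp⟩ := mem_Icc.1 hl
    refine (hterm l).trans <| mul_le_mul (pow_le_pow_right₀ hQ <| ha hl1 (by simp) (by omega))
      (pow_le_pow_right₀ hs <| ha (by simp) (by simp) (by omega)) (by positivity)
      (pow_nonneg (zero_le_one.trans hQ) _)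
  have hsum := sum_le_card_nsmul _ _ _ hearly
  rw [Nat.card_Icc, nsmul_eq_mul] at hsum
  have hP : 0 ≤ Q ^ a (p + 1) * s ^ a (p + 1) := by positivity
  rw [levyDensity, sum_Icc_succ_top (by omega)]
  push_cast at hsum ⊢
  nlinarith [hterm (p + 1)]

lemma abs_levyDensity_div_sub_one_le (hQ : 1 ≤ Q) (hs : 1 ≤ s)
    (ha : ∀ n, 1 ≤ n → 2 * a n ≤ a (n + 1)) (ha1 : 1 ≤ a 1) (hn : 1 ≤ n) :
    |levyDensity Q s a n / (Q ^ a n * s ^ a (n + 1)) - 1| ≤ (n + 1) * (s ^ n)⁻¹ := by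
  set D := Q ^ a n * s ^ a (n + 1)
  set P := Q ^ a n * s ^ a n
  have hs0 : 0 < s := zero_lt_one.trans_le hs
  have hD : 0 < D := by positivity
  have hlow := levyDensity_ge (zero_le_one.trans hQ) hs (monotoneOn_of_doubling ha) hn
  have hup := levyDensity_le hQ hs (monotoneOn_of_doubling ha) hn
  have hself := self_le_of_doubling ha ha1
  have hsD : s * s ^ n ≤ D := by
    rw [← pow_succ']
    calc s ^ (n + 1) ≤ s ^ a (n + 1) := pow_le_pow_right₀ hs (hself _)
      _ ≤ D := le_mul_of_one_le_left (by positivity) (one_le_pow₀ hQ)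
  have hPD : P * s ^ n ≤ D := by
    rw [mul_assoc, ← pow_add]
    exact mul_le_mul_of_nonneg_left (pow_le_pow_right₀ hs (by linarith [ha n hn, hself n]))
      (by positivity)
  have hsn : 0 < s ^ n := by positivity
  rw [div_sub_one hD.ne', abs_div, abs_of_pos hD, div_le_iff₀ hD, abs_sub_le_iff]
  rw [← le_mul_inv_iff₀ hsn] at hsD hPD
  have hP : 0 ≤ P := by positivity
  constructor <;> nlinarith

lemma tendsto_levyDensity_div (hQ : 1 ≤ Q) (hs : 1 < s)
    (ha : ∀ n, 1 ≤ n → 2 * a n ≤ a (n + 1)) (ha1 : 1 ≤ a 1) :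
    Tendsto (fun n => levyDensity Q s a n / (Q ^ a n * s ^ a (n + 1))) atTop (𝓝 1) := by
  have ht0 : 0 ≤ s⁻¹ := by positivity
  have ht1 : s⁻¹ < 1 := inv_lt_one_of_one_lt₀ hs
  have herr : Tendsto (fun n : ℕ => ((n : ℝ) + 1) * (s ^ n)⁻¹) atTop (𝓝 0) := by
    simp_rw [add_mul, one_mul, ← inv_pow]
    simpa using (tendsto_pow_const_mul_const_pow_of_lt_one 1 ht0 ht1).add
      (tendsto_pow_atTop_nhds_zero_of_lt_one ht0 ht1)
  rw [tendsto_iff_norm_sub_tendsto_zero]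
  refine squeeze_zero_norm' ?_ herr
  filter_upwards [eventually_ge_atTop 1] with n hn
  rw [Real.norm_eq_abs, abs_norm]
  exact abs_levyDensity_div_sub_one_le hQ hs.le ha ha1 hn

end LevyDensity

theorem stmt11_general (q : ℕ) (hq : 2 ≤ q) (α : ℝ) (hα : 0 < α)
    (m : ℕ → ℕ) (hm1 : m 1 = 1)
    (hmgrow : ∀ n : ℕ, 1 ≤ n → 2 * m n ≤ m (n + 1))
    (ν : ℕ → ℝ)
    (hν : ∀ n : ℕ, ν n = (q : ℝ) ^ α + ∑ l ∈ Finset.Icc 1 n,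
      (q : ℝ) ^ (l * m l) *
        ((q : ℝ) ^ (α * (((l + 1) * m (l + 1) : ℕ) : ℝ))
          - (q : ℝ) ^ (α * ((l * m l : ℕ) : ℝ)))) :
    Tendsto (fun n : ℕ =>
        ν n * (q : ℝ) ^ (-(((n * m n : ℕ) : ℝ) + α * (((n + 1) * m (n + 1) : ℕ) : ℝ))))
      atTop (𝓝 1) := by
  have hq1 : (1 : ℝ) < q := by exact_mod_cast hq
  have hq0 : (0 : ℝ) ≤ q := by positivity
  have hpow : ∀ k : ℕ, (q : ℝ) ^ (α * (k : ℝ)) = ((q : ℝ) ^ α) ^ k := fun k => by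
    rw [Real.rpow_mul hq0, Real.rpow_natCast]
  have hdoubling : ∀ n, 1 ≤ n → 2 * (n * m n) ≤ (n + 1) * m (n + 1) := fun n hn => by
    nlinarith [hmgrow n hn]
  have hlim := tendsto_levyDensity_div hq1.le (Real.one_lt_rpow hq1 hα) hdoubling (by simp [hm1])
  refine hlim.congr fun n => ?_
  rw [Real.rpow_neg hq0, Real.rpow_add (by positivity), hpow, Real.rpow_natCast, hν, div_eq_mul_inv]
  simp only [levyDensity, hpow]

/-- asymptotics of the Lévy density:
`ν_n ∼ q^{n m_n + α (n+1) m_{n+1}}` as `n → ∞`. -/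
theorem stmt11 (q : ℕ) (hq : 2 ≤ q) (α : ℝ) (hα : 0 < α)
    (m : ℕ → ℕ) (hm0 : m 0 = 0) (hm1 : m 1 = 1)
    (hmgrow : ∀ n : ℕ, 1 ≤ n → 2 * m n ≤ m (n + 1))
    (ν : ℕ → ℝ)
    (hν : ∀ n : ℕ, ν n = (q : ℝ) ^ α + ∑ l ∈ Finset.Icc 1 n,
      (q : ℝ) ^ (l * m l) *
        ((q : ℝ) ^ (α * (((l + 1) * m (l + 1) : ℕ) : ℝ))
          - (q : ℝ) ^ (α * ((l * m l : ℕ) : ℝ)))) :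
    Tendsto (fun n : ℕ =>
        ν n * (q : ℝ) ^ (-(((n * m n : ℕ) : ℝ) + α * (((n + 1) * m (n + 1) : ℕ) : ℝ))))
      atTop (𝓝 1) :=
  stmt11_general q hq α hα m hm1 hmgrow ν hν
end
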